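/- arXiv:math/9908140 — 4 statements merged into one kernel-verified Lean document; each statement's English description precedes it below -/
import Mathlib

section
/- Let q be a real number with q ≠ 1, let n be a positive integer, and let f : ℝ → ℝ be a function defined on an interval (-ρ, ρ) with ρ > 0 whose n-th derivative at x = 0 exists. Then the value of the n-th iterated q-derivative of f at 0 satisfies (D_q^n f)(0) = (f^(n)(0)/n!) · (q;q)_n/(1-q)^n, where (q;q)_n = ∏_{j=1}^{n} (1 - q^j). -/
/-!
Peano's form of Taylor's theorem needs only the existence of `f^{(n)}(0)`: it gives
`f x = ∑_{i ≤ n} a_i x^i + o(x^n)` on a full neighbourhood of `0`, with `a_i = f^{(i)}(0)/i!`.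
The operator `D_q` sends `x^i` to `[i]_q x^(i-1)`, where `[i]_q = (1 - q^i)/(1 - q)`, and sends a
function that is `o(x^(m+1))` to one that is `o(x^m)`: away from `0` this is a difference quotient
of two `o(x^(m+1))` terms, and at `0` it is the derivative, which vanishes. Applying `D_q` `n`
times leaves `a_n [1]_q ⋯ [n]_q + o(1)`, whose value at `0` is `a_n (q;q)_n/(1-q)^n`.
-/

open Filter Finset

/-- The `q`-derivative operator: `D_q f x = (f x - f (q x)) / ((1-q) x)` for `x ≠ 0`,
and `D_q f 0 = f'(0)`. -/
noncomputable def qDeriv (q : ℝ) (f : ℝ → ℝ) : ℝ → ℝ :=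
  fun x => if x = 0 then deriv f 0 else (f x - f (q * x)) / ((1 - q) * x)

/-- The `q`-Pochhammer symbol `(a;q)_n = ∏_{j=0}^{n-1} (1 - a q^j)`. -/
noncomputable def qPoch (a q : ℝ) (n : ℕ) : ℝ := ∏ j ∈ Finset.range n, (1 - a * q ^ j)

open Asymptotics Set Topology

section Taylor

variable {E : Type*} [NormedAddCommGroup E] [NormedSpace ℝ E]

theorem isLittleO_pow_succ_of_eventually_hasDerivAt {f f' : ℝ → E} {x₀ : ℝ} {n : ℕ}
    (hff' : ∀ᶠ x in 𝓝 x₀, HasDerivAt f (f' x) x) (hf' : f' =o[𝓝 x₀] fun x ↦ (x - x₀) ^ n) :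
    (fun x ↦ f x - f x₀) =o[𝓝 x₀] fun x ↦ (x - x₀) ^ (n + 1) := by
  obtain ⟨ε, hε, hball⟩ := Metric.eventually_nhds_iff_ball.1 hff'
  have hnhds : 𝓝[Metric.ball x₀ ε] x₀ = 𝓝 x₀ :=
    nhdsWithin_eq_nhds.2 (Metric.ball_mem_nhds x₀ hε)
  rw [← hnhds] at hf' ⊢
  exact (convex_ball x₀ ε).isLittleO_pow_succ_real (Metric.mem_ball_self hε)
    (fun x hx ↦ (hball x hx).hasDerivWithinAt) hf'

theorem taylor_isLittleO_of_differentiableAt {f : ℝ → E} {x₀ : ℝ} {n : ℕ}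
    (hf : ∀ k < n, ∀ᶠ x in 𝓝 x₀, DifferentiableAt ℝ (iteratedDeriv k f) x)
    (hf' : DifferentiableAt ℝ (iteratedDeriv n f) x₀) :
    (fun x ↦ f x - taylorWithinEval f (n + 1) univ x₀ x) =o[𝓝 x₀]
      fun x ↦ (x - x₀) ^ (n + 1) := by
  induction n generalizing f with
  | zero =>
    rw [iteratedDeriv_zero] at hf'
    simpa [taylorWithinEval_succ, taylor_within_zero_eval, derivWithin_univ, sub_sub] using
      hasDerivAt_iff_isLittleO.1 hf'.hasDerivAt
  | succ n ih =>
    have hT := ih (f := deriv f)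
      (fun k hk ↦ by simpa only [iteratedDeriv_succ'] using hf (k + 1) (by omega))
      (by simpa only [iteratedDeriv_succ'] using hf')
    have hremainder := isLittleO_pow_succ_of_eventually_hasDerivAt
      (f := fun x ↦ f x - taylorWithinEval f (n + 2) univ x₀ x) ?_ hT
    · simpa [taylorWithinEval_self] using hremainder
    · filter_upwards [hf 0 n.succ_pos] with x hx
      rw [iteratedDeriv_zero] at hx
      have hTd := hasDerivAt_taylorWithinEval_succ (x := x) (x₀ := x₀) (s := univ) f (n + 1)
      rw [derivWithin_univ] at hTd
      exact hx.hasDerivAt.sub hTd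

end Taylor

theorem taylorWithinEval_univ_zero (f : ℝ → ℝ) (n : ℕ) (x : ℝ) :
    taylorWithinEval f n univ 0 x =
      ∑ i ∈ range (n + 1), iteratedDeriv i f 0 / i.factorial * x ^ i := by
  simp only [taylor_within_apply, iteratedDerivWithin_univ, sub_zero, smul_eq_mul]
  exact sum_congr rfl fun i _ ↦ by ring

theorem hasDerivAt_zero_of_isLittleO_pow {𝕜 F : Type*} [NontriviallyNormedField 𝕜]
    [NormedAddCommGroup F] [NormedSpace 𝕜 F] {f : 𝕜 → F} {n : ℕ}
    (h : f =o[𝓝 0] (· ^ (n + 1))) : HasDerivAt f 0 0 := by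
  have hf0 : f 0 = 0 := h.isBigO.eq_zero_imp.self_of_nhds (by simp)
  have hpow : (fun x : 𝕜 ↦ x ^ (n + 1)) =O[𝓝 0] fun x ↦ x := by
    rcases n with _ | n
    · simpa using isBigO_refl _ _
    · exact (isLittleO_pow_id (by omega)).isBigO
  rw [hasDerivAt_iff_isLittleO]
  simpa [hf0] using h.trans_isBigO hpow

noncomputable def qNumber (q : ℝ) (n : ℕ) : ℝ := (1 - q ^ n) / (1 - q)

theorem qNumber_zero (q : ℝ) : qNumber q 0 = 0 := by simp [qNumber]

theorem qNumber_one {q : ℝ} (hq : q ≠ 1) : qNumber q 1 = 1 := by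
  simpa [qNumber] using div_self (sub_ne_zero.2 hq.symm)

theorem prod_range_qNumber_succ (q : ℝ) (n : ℕ) :
    ∏ j ∈ range n, qNumber q (j + 1) = qPoch q q n / (1 - q) ^ n := by
  simp only [qNumber, qPoch, prod_div_distrib, prod_const, card_range, pow_succ']

section qDeriv

variable {q : ℝ}

theorem qDeriv_apply_zero (f : ℝ → ℝ) : qDeriv q f 0 = deriv f 0 := if_pos rfl

theorem qDeriv_apply_of_ne_zero (f : ℝ → ℝ) {x : ℝ} (hx : x ≠ 0) :
    qDeriv q f x = (f x - f (q * x)) / ((1 - q) * x) := if_neg hx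

theorem qDeriv_add {f g : ℝ → ℝ} (hf : DifferentiableAt ℝ f 0) (hg : DifferentiableAt ℝ g 0) :
    qDeriv q (fun x ↦ f x + g x) = fun x ↦ qDeriv q f x + qDeriv q g x := by
  funext x
  rcases eq_or_ne x 0 with rfl | hx
  · simp only [qDeriv_apply_zero, deriv_fun_add hf hg]
  · simp only [qDeriv_apply_of_ne_zero _ hx]
    ring

theorem qDeriv_sum {ι : Type*} (s : Finset ι) {f : ι → ℝ → ℝ}
    (hf : ∀ i ∈ s, DifferentiableAt ℝ (f i) 0) :
    qDeriv q (fun x ↦ ∑ i ∈ s, f i x) = fun x ↦ ∑ i ∈ s, qDeriv q (f i) x := by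
  funext x
  rcases eq_or_ne x 0 with rfl | hx
  · simp only [qDeriv_apply_zero, deriv_fun_sum hf]
  · simp only [qDeriv_apply_of_ne_zero _ hx, ← sum_sub_distrib, sum_div]

theorem qDeriv_const_mul (c : ℝ) (f : ℝ → ℝ) :
    qDeriv q (fun x ↦ c * f x) = fun x ↦ c * qDeriv q f x := by
  funext x
  rcases eq_or_ne x 0 with rfl | hx
  · simp only [qDeriv_apply_zero, deriv_const_mul_field]
  · simp only [qDeriv_apply_of_ne_zero _ hx, ← mul_sub, mul_div_assoc]

theorem qDeriv_pow (hq : q ≠ 1) (n : ℕ) :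
    qDeriv q (fun x ↦ x ^ n) = fun x ↦ qNumber q n * x ^ (n - 1) := by
  funext x
  rcases eq_or_ne x 0 with rfl | hx
  · rcases n with _ | _ | n <;> simp [qDeriv_apply_zero, qNumber_zero, qNumber_one hq]
  · have h1q : 1 - q ≠ 0 := sub_ne_zero.2 hq.symm
    rcases n with _ | n
    · simp [qDeriv_apply_of_ne_zero _ hx, qNumber_zero]
    · rw [qDeriv_apply_of_ne_zero _ hx, qNumber, Nat.add_sub_cancel]
      field_simp
      ring

theorem qDeriv_sum_mul_pow (hq : q ≠ 1) (s : Finset ℕ) (c : ℕ → ℝ) :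
    qDeriv q (fun x ↦ ∑ i ∈ s, c i * x ^ i) =
      fun x ↦ ∑ i ∈ s, c i * qNumber q i * x ^ (i - 1) := by
  rw [qDeriv_sum s (f := fun i x ↦ c i * x ^ i) fun i _ ↦ by fun_prop]
  simp only [qDeriv_const_mul, qDeriv_pow hq, mul_assoc]

theorem qDeriv_isLittleO_pow {R : ℝ → ℝ} {m : ℕ} (h : R =o[𝓝 0] (· ^ (m + 1))) :
    qDeriv q R =o[𝓝 0] (· ^ m) := by
  have hR0 : qDeriv q R 0 = 0 := by
    rw [qDeriv_apply_zero, (hasDerivAt_zero_of_isLittleO_pow h).deriv]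
  rw [← nhdsNE_sup_pure]
  refine IsLittleO.sup ?_ (isLittleO_pure.2 hR0)
  have hqx : Tendsto (fun x : ℝ ↦ q * x) (𝓝 0) (𝓝 0) := by
    simpa using (tendsto_id (x := 𝓝 (0 : ℝ))).const_mul q
  have hRq : (fun x ↦ R (q * x)) =o[𝓝 0] (· ^ (m + 1)) := by
    refine (h.comp_tendsto hqx).trans_isBigO ?_
    simpa only [Function.comp_def, mul_pow] using
      (isBigO_refl (· ^ (m + 1)) (𝓝 (0 : ℝ))).const_mul_left (q ^ (m + 1))
  have hinv : (fun x : ℝ ↦ ((1 - q) * x)⁻¹) =O[𝓝[≠] 0] fun x ↦ x⁻¹ := by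
    simpa only [mul_inv] using (isBigO_refl (·⁻¹) (𝓝[≠] (0 : ℝ))).const_mul_left (1 - q)⁻¹
  refine (((h.sub hRq).mono nhdsWithin_le_nhds).mul_isBigO hinv).congr' ?_ ?_
  · filter_upwards [self_mem_nhdsWithin] with x hx
    rw [qDeriv_apply_of_ne_zero _ hx, div_eq_mul_inv]
  · filter_upwards [self_mem_nhdsWithin] with x hx
    rw [pow_succ, mul_inv_cancel_right₀ hx]

theorem qDeriv_sub_sum_isLittleO (hq : q ≠ 1) {g : ℝ → ℝ} {c : ℕ → ℝ} {m : ℕ}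
    (h : (fun x ↦ g x - ∑ i ∈ range (m + 2), c i * x ^ i) =o[𝓝 0] (· ^ (m + 1))) :
    (fun x ↦ qDeriv q g x - ∑ i ∈ range (m + 1), c (i + 1) * qNumber q (i + 1) * x ^ i)
      =o[𝓝 0] (· ^ m) := by
  set P : ℝ → ℝ := fun x ↦ ∑ i ∈ range (m + 2), c i * x ^ i
  have hP : qDeriv q P = fun x ↦ ∑ i ∈ range (m + 1), c (i + 1) * qNumber q (i + 1) * x ^ i := by
    rw [qDeriv_sum_mul_pow hq]
    funext x
    rw [sum_range_succ' _ (m + 1)]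
    simp [qNumber_zero]
  have hsplit : qDeriv q g = fun x ↦ qDeriv q P x + qDeriv q (fun y ↦ g y - P y) x := by
    rw [← qDeriv_add (by fun_prop) (hasDerivAt_zero_of_isLittleO_pow h).differentiableAt]
    simp only [P, add_sub_cancel]
  simpa [hsplit, hP] using qDeriv_isLittleO_pow (q := q) h

theorem qDeriv_iterate_apply_zero_of_isLittleO (hq : q ≠ 1) {g : ℝ → ℝ} {c : ℕ → ℝ} {m : ℕ}
    (h : (fun x ↦ g x - ∑ i ∈ range (m + 1), c i * x ^ i) =o[𝓝 0] (· ^ m)) :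
    (qDeriv q)^[m] g 0 = c m * ∏ j ∈ range m, qNumber q (j + 1) := by
  induction m generalizing g c with
  | zero =>
    have hlim : Tendsto (fun x ↦ g x - c 0) (𝓝 0) (𝓝 0) :=
      (isLittleO_one_iff ℝ).1 (by simpa using h)
    simpa [sub_eq_zero] using eq_of_tendsto_nhds hlim
  | succ m ih =>
    rw [Function.iterate_succ_apply, ih (qDeriv_sub_sum_isLittleO hq h), prod_range_succ]
    ring

end qDeriv

theorem qDeriv_iterate_apply_zero_general (q : ℝ) (hq : q ≠ 1) (n : ℕ)
    (f : ℝ → ℝ)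
    (hf : ∀ k < n - 1, ∀ᶠ x in nhds (0 : ℝ), DifferentiableAt ℝ (iteratedDeriv k f) x)
    (hf' : DifferentiableAt ℝ (iteratedDeriv (n - 1) f) 0) :
    ((qDeriv q)^[n] f) 0 =
      iteratedDeriv n f 0 / n.factorial * (qPoch q q n / (1 - q) ^ n) := by
  rcases n with _ | n
  · simp [qPoch]
  · rw [Nat.add_sub_cancel] at hf hf'
    have htaylor := taylor_isLittleO_of_differentiableAt hf hf'
    simp only [taylorWithinEval_univ_zero, sub_zero] at htaylor
    rw [qDeriv_iterate_apply_zero_of_isLittleO hq htaylor, prod_range_qNumber_succ]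

/-- If `f^{(n)}(0)` exists, then `(D_q^n f)(0) = (f^{(n)}(0)/n!) ⬝ (q;q)_n/(1-q)^n`. -/
theorem qDeriv_iterate_apply_zero (q : ℝ) (hq : q ≠ 1) (n : ℕ) (hn : 0 < n)
    (f : ℝ → ℝ)
    (hf : ∀ k < n - 1, ∀ᶠ x in nhds (0 : ℝ), DifferentiableAt ℝ (iteratedDeriv k f) x)
    (hf' : DifferentiableAt ℝ (iteratedDeriv (n - 1) f) 0) :
    ((qDeriv q)^[n] f) 0 =
      iteratedDeriv n f 0 / n.factorial * (qPoch q q n / (1 - q) ^ n) :=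
  qDeriv_iterate_apply_zero_general q hq n f hf hf'
end

section
/- Let f : ℝ → ℝ be defined on an interval (-ρ, ρ) with ρ > 0, let n be a positive integer, and suppose f^(n)(0) exists. Then for all x with 0 < |x| < ρ one has x^n · (D_0^n f)(x) = f(x) - Σ_{k=0}^{n-1} (f^(k)(0)/k!) x^k, where D_0 is the q-derivative operator with q = 0, i.e. D_0 f(x) = (f(x) - f(0))/x for x ≠ 0 and D_0 f(0) = f'(0). -/
/-!
`D_0` is `dslope · 0`, and iterating `(x - a) • dslope g a x = g x - g a` gives, for every `x`,
`x ^ n • D_0^n f x = f x - ∑_{k<n} x ^ k • D_0^k f 0` with no assumption on `f` at all. It remains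
to identify `D_0^k f 0 = f^(k)(0) / k!` for `k < n`. Inductively, the same identity shows that
`D_0^(k+1) f x - f^(k+1)(0) / (k+1)!` is the Peano remainder of order `k + 1` divided by
`x ^ (k + 1)`, so it tends to `0` as `x → 0`; hence `D_0^k f` has derivative `f^(k+1)(0) / (k+1)!`
at `0`, which is the value of `D_0^(k+1) f` there.
-/

open Filter Finset

open Topology Asymptotics Nat

section
variable {𝕜 E : Type*} [NontriviallyNormedField 𝕜] [NormedAddCommGroup E] [NormedSpace 𝕜 E]

theorem pow_sub_smul_iterate_dslope (f : 𝕜 → E) (a b : 𝕜) (n : ℕ) :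
    (b - a) ^ n • (Function.swap dslope a)^[n] f b =
      f b - ∑ k ∈ range n, (b - a) ^ k • (Function.swap dslope a)^[k] f a := by
  induction n with
  | zero => simp
  | succ n ih =>
    rw [Function.iterate_succ_apply', pow_succ, mul_smul, Function.swap, sub_smul_dslope,
      smul_sub, ih, sum_range_succ]
    abel

theorem dslope_same_eq_of_tendsto {f : 𝕜 → E} {a : 𝕜} {c : E}
    (h : Tendsto (dslope f a) (𝓝[≠] a) (𝓝 c)) : dslope f a a = c := by
  rw [dslope_same]
  refine (hasDerivAt_iff_tendsto_slope.mpr (h.congr' ?_)).deriv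
  filter_upwards [self_mem_nhdsWithin] with x hx using dslope_of_ne f hx

theorem Asymptotics.IsLittleO.tendsto_of_pow_sub_smul {u : 𝕜 → E} {a : 𝕜} {n : ℕ}
    (h : (fun x ↦ (x - a) ^ n • u x) =o[𝓝 a] fun x ↦ (x - a) ^ n) :
    Tendsto u (𝓝[≠] a) (𝓝 0) := by
  have hcancel := (isBigO_refl (fun x ↦ ((x - a) ^ n)⁻¹) (𝓝[≠] a)).smul_isLittleO
    (h.mono nhdsWithin_le_nhds)
  refine isLittleO_one_iff (F := 𝕜) |>.mp (hcancel.congr' ?_ ?_)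
  all_goals
    filter_upwards [self_mem_nhdsWithin] with x hx
    have hpow : (x - a) ^ n ≠ 0 := pow_ne_zero _ (sub_ne_zero.mpr hx)
  · simp [smul_smul, hpow]
  · simp [hpow]

end

theorem qDeriv_zero_eq_dslope : qDeriv 0 = Function.swap dslope 0 := by
  ext f x
  by_cases hx : x = 0
  · simp [qDeriv, hx, dslope_same]
  · simp [qDeriv, hx, dslope_of_ne, slope_def_field]

section
variable {E : Type*} [NormedAddCommGroup E] [NormedSpace ℝ E]

theorem taylor_isLittleO_of_differentiableAt_iteratedDeriv {f : ℝ → E} {a : ℝ} {n : ℕ}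
    (hf : ∀ k < n, ∀ᶠ x in 𝓝 a, DifferentiableAt ℝ (iteratedDeriv k f) x)
    (hfn : DifferentiableAt ℝ (iteratedDeriv n f) a) :
    (fun x ↦ f x - taylorWithinEval f (n + 1) Set.univ a x) =o[𝓝 a]
      fun x ↦ (x - a) ^ (n + 1) := by
  induction n generalizing f with
  | zero =>
    rw [iteratedDeriv_zero] at hfn
    simp only [zero_add, pow_one]
    refine hfn.hasDerivAt.isLittleO.congr_left fun x ↦ ?_
    simp [taylor_within_apply, sub_sub]
  | succ n ih =>
    obtain ⟨ε, hε, hdiff⟩ := Metric.eventually_nhds_iff_ball.mp (by simpa using hf 0 n.succ_pos)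
    have hderiv : (fun x ↦ deriv f x - taylorWithinEval (deriv f) (n + 1) Set.univ a x)
        =o[𝓝 a] fun x ↦ (x - a) ^ (n + 1) :=
      ih (fun k hk ↦ by simpa [iteratedDeriv_succ'] using hf (k + 1) (by omega))
        (by simpa [iteratedDeriv_succ'] using hfn)
    have hball := (convex_ball a ε).isLittleO_pow_succ_real (Metric.mem_ball_self hε)
      (fun x hx ↦ ((hdiff x hx).hasDerivAt.sub
        (derivWithin_univ (f := f) ▸ hasDerivAt_taylorWithinEval_succ f (n + 1))).hasDerivWithinAt)
      (hderiv.mono nhdsWithin_le_nhds)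
    rw [Metric.isOpen_ball.nhdsWithin_eq (Metric.mem_ball_self hε)] at hball
    simpa using hball

theorem iterate_dslope_self_eq_inv_factorial_smul {f : ℝ → E} {a : ℝ} {m : ℕ}
    (hf : ∀ k < m, ∀ᶠ x in 𝓝 a, DifferentiableAt ℝ (iteratedDeriv k f) x) :
    ∀ k ≤ m, (Function.swap dslope a)^[k] f a = (k ! : ℝ)⁻¹ • iteratedDeriv k f a := by
  intro k
  induction k using Nat.strong_induction_on with
  | _ k ih =>
  rcases k with _ | k
  · simp
  intro hk
  set D : (ℝ → E) → ℝ → E := Function.swap dslope a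
  set c := ((k + 1)! : ℝ)⁻¹ • iteratedDeriv (k + 1) f a
  have hremainder : ∀ x, f x - taylorWithinEval f (k + 1) Set.univ a x =
      (x - a) ^ (k + 1) • (D^[k + 1] f x - c) := by
    intro x
    have hcoeff : ∀ j ∈ range (k + 1), (x - a) ^ j • D^[j] f a =
        ((j ! : ℝ)⁻¹ * (x - a) ^ j) • iteratedDerivWithin j f Set.univ a := by
      intro j hj
      rw [ih j (by simpa using hj) (by simp at hj; omega), iteratedDerivWithin_univ, smul_smul,
        mul_comm]
    rw [taylor_within_apply, sum_range_succ, smul_sub, pow_sub_smul_iterate_dslope,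
      sum_congr rfl hcoeff, iteratedDerivWithin_univ, smul_smul, mul_comm]
    abel
  have hpeano := taylor_isLittleO_of_differentiableAt_iteratedDeriv
    (fun j hj ↦ hf j (by omega)) (hf k (by omega)).self_of_nhds
  have hlim : Tendsto (D^[k + 1] f) (𝓝[≠] a) (𝓝 c) := by
    simpa using ((hpeano.congr_left hremainder).tendsto_of_pow_sub_smul).add_const c
  rw [Function.iterate_succ_apply'] at hlim ⊢
  exact dslope_same_eq_of_tendsto hlim

end

theorem qDeriv_zero_iterate_eq_general (f : ℝ → ℝ) (ρ : ℝ) (n : ℕ)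
    (hf : ∀ k < n - 1, ∀ᶠ x in nhds (0 : ℝ), DifferentiableAt ℝ (iteratedDeriv k f) x) :
    ∀ x : ℝ, 0 < |x| → |x| < ρ →
      x ^ n * ((qDeriv 0)^[n] f) x =
        f x - ∑ k ∈ Finset.range n, iteratedDeriv k f 0 / k.factorial * x ^ k := by
  intro x _ _
  have hexpansion := pow_sub_smul_iterate_dslope f 0 x n
  simp only [sub_zero, smul_eq_mul] at hexpansion
  rw [qDeriv_zero_eq_dslope, hexpansion]
  refine congrArg _ (sum_congr rfl fun k hk ↦ ?_)
  rw [iterate_dslope_self_eq_inv_factorial_smul hf k (by simp at hk; omega), smul_eq_mul]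
  ring

/-- If `f^{(n)}(0)` exists, then for `0 < |x| < ρ`,
`x^n ⬝ (D_0^n f)(x) = f x - ∑_{k=0}^{n-1} (f^{(k)}(0)/k!) x^k`. -/
theorem qDeriv_zero_iterate_eq (f : ℝ → ℝ) (ρ : ℝ) (hρ : 0 < ρ) (n : ℕ) (hn : 0 < n)
    (hf : ∀ k < n - 1, ∀ᶠ x in nhds (0 : ℝ), DifferentiableAt ℝ (iteratedDeriv k f) x)
    (hf' : DifferentiableAt ℝ (iteratedDeriv (n - 1) f) 0) :
    ∀ x : ℝ, 0 < |x| → |x| < ρ →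
      x ^ n * ((qDeriv 0)^[n] f) x =
        f x - ∑ k ∈ Finset.range n, iteratedDeriv k f 0 / k.factorial * x ^ k :=
  qDeriv_zero_iterate_eq_general f ρ n hf
end

section
/- Let f : ℝ → ℝ be defined on an interval (-ρ, ρ) with ρ > 0, let n be a positive integer, and suppose f^(n)(0) exists. Then (D_0^n f)(0) = f^(n)(0)/n!, where D_0 is the q-derivative operator with q = 0. -/
open Filter Finset

open Set Topology Nat

/-! For `x ≠ 0` the definition unrolls to
`D_0^m f x = (f x - ∑_{k<m} D_0^k f 0 * x^k) / x^m`, while `D_0^{m+1} f 0` is the derivative of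
`D_0^m f` at `0`, i.e. the limit of its slope `D_0^{m+1} f x`. By induction the coefficients
`D_0^k f 0` for `k ≤ m` are the Taylor coefficients `f^(k)(0)/k!`, so `D_0^{m+1} f 0` is the limit
of `(f x - T_m f x) / x^(m+1)`, which is `f^(m+1)(0)/(m+1)!` by the Peano form of Taylor's theorem
(proved by L'Hôpital's rule, needing only that `f^(m+1)(0)` exists). -/

theorem tendsto_sub_taylorWithinEval_div_pow {f : ℝ → ℝ} {x₀ : ℝ} {m : ℕ}
    (hf : ∀ k < m, ∀ᶠ x in 𝓝 x₀, DifferentiableAt ℝ (iteratedDeriv k f) x)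
    (hf' : DifferentiableAt ℝ (iteratedDeriv m f) x₀) :
    Tendsto (fun x ↦ (f x - taylorWithinEval f m univ x₀ x) / (x - x₀) ^ (m + 1)) (𝓝[≠] x₀)
      (𝓝 (iteratedDeriv (m + 1) f x₀ / (m + 1)!)) := by
  induction m generalizing f with
  | zero =>
    have := hasDerivAt_iff_tendsto_slope.mp (iteratedDeriv_zero (f := f) ▸ hf').hasDerivAt
    simpa [slope_fun_def_field, iteratedDeriv_one] using this
  | succ m ih =>
    have hderiv_f : ∀ k < m, ∀ᶠ x in 𝓝 x₀, DifferentiableAt ℝ (iteratedDeriv k (deriv f)) x :=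
      fun k hk ↦ by simpa only [← iteratedDeriv_succ'] using hf (k + 1) (by omega)
    have hlim := (ih hderiv_f (by rwa [← iteratedDeriv_succ'])).div_const (m + 2 : ℝ)
    have hremainder : ∀ᶠ x in 𝓝 x₀,
        HasDerivAt (fun y ↦ f y - taylorWithinEval f (m + 1) univ x₀ y)
          (deriv f x - taylorWithinEval (deriv f) m univ x₀ x) x := by
      filter_upwards [hf 0 (by omega)] with x hx
      have htaylor := hasDerivAt_taylorWithinEval_succ (s := univ) (x₀ := x₀) (x := x) f m
      rw [derivWithin_univ] at htaylor
      exact (iteratedDeriv_zero (f := f) ▸ hx).hasDerivAt.sub htaylor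
    have hpow (x : ℝ) :
        HasDerivAt (fun y ↦ (y - x₀) ^ (m + 2)) ((m + 2 : ℝ) * (x - x₀) ^ (m + 1)) x := by
      simpa using ((hasDerivAt_id x).sub_const x₀).fun_pow (m + 2)
    refine HasDerivAt.lhopital_zero_nhdsNE (eventually_nhdsWithin_of_eventually_nhds hremainder)
      (.of_forall hpow) ?_ ?_ ?_ ?_
    · filter_upwards [self_mem_nhdsWithin] with x hx
      have : x - x₀ ≠ 0 := sub_ne_zero.mpr hx
      positivity
    · have := hremainder.self_of_nhds.continuousAt.tendsto
      simpa using this.mono_left nhdsWithin_le_nhds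
    · exact (Continuous.tendsto' (by fun_prop) x₀ 0 (by simp)).mono_left nhdsWithin_le_nhds
    · convert hlim using 2 with x
      · rw [div_div, mul_comm]
      · rw [← iteratedDeriv_succ', factorial_succ (m + 1)]
        push_cast
        field_simp
        ring

theorem qDeriv_zero_apply_of_ne_zero (f : ℝ → ℝ) {x : ℝ} (hx : x ≠ 0) :
    qDeriv 0 f x = slope f 0 x := by
  simp [qDeriv, hx, slope_def_field]

theorem qDeriv_zero_apply_zero_of_tendsto {f : ℝ → ℝ} {L : ℝ}
    (h : Tendsto (qDeriv 0 f) (𝓝[≠] 0) (𝓝 L)) : qDeriv 0 f 0 = L := by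
  have hslope : Tendsto (slope f 0) (𝓝[≠] 0) (𝓝 L) :=
    h.congr' (eventually_nhdsWithin_of_forall fun x hx ↦ qDeriv_zero_apply_of_ne_zero f hx)
  simpa [qDeriv] using (hasDerivAt_iff_tendsto_slope.mpr hslope).deriv

theorem qDeriv_zero_iterate_apply_of_ne_zero (f : ℝ → ℝ) (m : ℕ) {x : ℝ} (hx : x ≠ 0) :
    (qDeriv 0)^[m] f x = (f x - ∑ k ∈ range m, (qDeriv 0)^[k] f 0 * x ^ k) / x ^ m := by
  induction m with
  | zero => simp
  | succ m ih =>
    rw [Function.iterate_succ_apply', qDeriv_zero_apply_of_ne_zero _ hx, slope_def_field, ih,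
      sum_range_succ]
    field_simp
    ring

theorem qDeriv_zero_iterate_succ_apply_of_ne_zero {f : ℝ → ℝ} {m : ℕ}
    (h : ∀ k ≤ m, (qDeriv 0)^[k] f 0 = iteratedDeriv k f 0 / k !) {x : ℝ} (hx : x ≠ 0) :
    (qDeriv 0)^[m + 1] f x = (f x - taylorWithinEval f m univ 0 x) / x ^ (m + 1) := by
  rw [qDeriv_zero_iterate_apply_of_ne_zero f _ hx, taylor_within_apply]
  congr 2
  refine sum_congr rfl fun k hk ↦ ?_
  rw [h k (Nat.lt_succ_iff.mp (mem_range.mp hk))]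
  simp only [sub_zero, iteratedDerivWithin_univ, smul_eq_mul]
  ring

theorem qDeriv_zero_iterate_apply_zero_general (f : ℝ → ℝ) (n : ℕ)
    (hf : ∀ k < n - 1, ∀ᶠ x in nhds (0 : ℝ), DifferentiableAt ℝ (iteratedDeriv k f) x)
    (hf' : DifferentiableAt ℝ (iteratedDeriv (n - 1) f) 0) :
    ((qDeriv 0)^[n] f) 0 = iteratedDeriv n f 0 / n.factorial := by
  suffices key : ∀ m ≤ n, (qDeriv 0)^[m] f 0 = iteratedDeriv m f 0 / m ! from key n le_rfl
  intro m
  induction m using Nat.strong_induction_on with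
  | _ m ih =>
    rcases m with _ | m
    · simp
    intro hm
    have hdiff : DifferentiableAt ℝ (iteratedDeriv m f) 0 := by
      rcases (Nat.le_sub_one_of_lt hm).eq_or_lt with rfl | hlt
      · exact hf'
      · exact (hf m hlt).self_of_nhds
    have htaylor := tendsto_sub_taylorWithinEval_div_pow (fun k hk ↦ hf k (by omega)) hdiff
    rw [Function.iterate_succ_apply']
    refine qDeriv_zero_apply_zero_of_tendsto (htaylor.congr' ?_)
    filter_upwards [self_mem_nhdsWithin] with x hx
    rw [← Function.iterate_succ_apply' (qDeriv 0),
      qDeriv_zero_iterate_succ_apply_of_ne_zero (fun k hk ↦ ih k (by omega) (by omega)) hx,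
      sub_zero]

/-- If `f^{(n)}(0)` exists, then `(D_0^n f)(0) = f^{(n)}(0)/n!`. -/
theorem qDeriv_zero_iterate_apply_zero (f : ℝ → ℝ) (n : ℕ) (hn : 0 < n)
    (hf : ∀ k < n - 1, ∀ᶠ x in nhds (0 : ℝ), DifferentiableAt ℝ (iteratedDeriv k f) x)
    (hf' : DifferentiableAt ℝ (iteratedDeriv (n - 1) f) 0) :
    ((qDeriv 0)^[n] f) 0 = iteratedDeriv n f 0 / n.factorial :=
  qDeriv_zero_iterate_apply_zero_general f n hf hf'
end

section
/- Let q be a real number with |q| ≠ 1 and q ≠ 0, and let n and m be nonnegative integers. Then Σ_{k=0}^{n} (-1)^k q^{k(m-n+1) + C(k,2)} [n choose k]_q = (q^{m-n+1}; q)_n, where C(k,2) = k(k-1)/2, [n choose k]_q = (q;q)_n / ((q;q)_k (q;q)_{n-k}), and (a;q)_n = ∏_{j=0}^{n-1} (1 - a q^j). In particular, for 0 ≤ m ≤ n this sum equals (q;q)_n if m = n and equals 0 if m < n. -/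
open Finset

/-- The `q`-binomial coefficient `[n choose k]_q = (q;q)_n / ((q;q)_k (q;q)_{n-k})`. -/
noncomputable def qBinom (q : ℝ) (n k : ℕ) : ℝ :=
  qPoch q q n / (qPoch q q k * qPoch q q (n - k))

lemma qPoch_succ (a q : ℝ) (n : ℕ) : qPoch a q (n + 1) = qPoch a q n * (1 - a * q ^ n) :=
  Finset.prod_range_succ _ _

lemma qPoch_ne (q : ℝ) (hne : ∀ j : ℕ, (1 : ℝ) - q ^ (j + 1) ≠ 0) (k : ℕ) :
    qPoch q q k ≠ 0 := by
  induction k with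
  | zero => simp [qPoch]
  | succ k ih =>
    rw [qPoch_succ]
    refine mul_ne_zero ih ?_
    have := hne k
    rwa [pow_succ'] at this

lemma qBinom_zero (q : ℝ) (hne : ∀ j : ℕ, (1 : ℝ) - q ^ (j + 1) ≠ 0) (n : ℕ) :
    qBinom q n 0 = 1 := by
  rw [qBinom, Nat.sub_zero, show qPoch q q 0 = 1 from rfl, one_mul,
    div_self (qPoch_ne q hne n)]

lemma qBinom_self (q : ℝ) (hne : ∀ j : ℕ, (1 : ℝ) - q ^ (j + 1) ≠ 0) (n : ℕ) :
    qBinom q n n = 1 := by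
  rw [qBinom, Nat.sub_self, show qPoch q q 0 = 1 from rfl, mul_one,
    div_self (qPoch_ne q hne n)]

lemma qBinom_pascal (q : ℝ) (hne : ∀ j : ℕ, (1 : ℝ) - q ^ (j + 1) ≠ 0) (k d : ℕ) :
    qBinom q (k + d + 2) (k + 1)
      = qBinom q (k + d + 1) (k + 1) + q ^ (d + 1) * qBinom q (k + d + 1) k := by
  unfold qBinom
  have h1 : k + d + 2 - (k + 1) = d + 1 := by omega
  have h2 : k + d + 1 - (k + 1) = d := by omega
  have h3 : k + d + 1 - k = d + 1 := by omega
  rw [h1, h2, h3, qPoch_succ q q (k + d + 1), qPoch_succ q q d, qPoch_succ q q k]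
  have hk : qPoch q q k ≠ 0 := qPoch_ne q hne k
  have hd : qPoch q q d ≠ 0 := qPoch_ne q hne d
  have hk1 : (1 : ℝ) - q * q ^ k ≠ 0 := by have := hne k; rwa [pow_succ'] at this
  have hd1 : (1 : ℝ) - q * q ^ d ≠ 0 := by have := hne d; rwa [pow_succ'] at this
  field_simp
  ring_nf

lemma qBinom_key (q : ℝ) (hne : ∀ j : ℕ, (1 : ℝ) - q ^ (j + 1) ≠ 0) (x : ℝ) (n : ℕ) :
    ∑ k ∈ Finset.range (n + 1), (-1 : ℝ) ^ k * q ^ k.choose 2 * x ^ k * qBinom q n k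
      = ∏ j ∈ Finset.range n, (1 - x * q ^ j) := by
  induction n with
  | zero => simp [qBinom, qPoch]
  | succ n ih =>
    rw [Finset.prod_range_succ, ← ih, Finset.sum_range_succ, Finset.sum_range_succ',
      show (∑ k ∈ Finset.range (n + 1),
          (-1 : ℝ) ^ k * q ^ k.choose 2 * x ^ k * qBinom q n k) * (1 - x * q ^ n)
        = (∑ k ∈ Finset.range (n + 1),
            (-1 : ℝ) ^ k * q ^ k.choose 2 * x ^ k * qBinom q n k)
          + (-(x * q ^ n)) * (∑ k ∈ Finset.range (n + 1),
            (-1 : ℝ) ^ k * q ^ k.choose 2 * x ^ k * qBinom q n k) from by ring]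
    nth_rewrite 1 [Finset.sum_range_succ]
    have hsplit : ∀ i ∈ Finset.range n,
        (-1 : ℝ) ^ (i + 1) * q ^ (i + 1).choose 2 * x ^ (i + 1) * qBinom q (n + 1) (i + 1)
          = (-1 : ℝ) ^ (i + 1) * q ^ (i + 1).choose 2 * x ^ (i + 1) * qBinom q n (i + 1)
            + (-(x * q ^ n)) * ((-1 : ℝ) ^ i * q ^ i.choose 2 * x ^ i * qBinom q n i) := by
      intro i hi
      rw [Finset.mem_range] at hi
      obtain ⟨d, hd⟩ : ∃ d, n = i + d + 1 := ⟨n - i - 1, by omega⟩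
      subst hd
      rw [qBinom_pascal q hne i d]
      have hc : (i + 1).choose 2 = i + i.choose 2 := by
        rw [Nat.choose_succ_succ, Nat.choose_one_right]
      rw [hc, pow_add, pow_add, show i + d + 1 = i + (d + 1) from by ring, pow_add]
      ring
    rw [Finset.sum_congr rfl hsplit, Finset.sum_add_distrib, ← Finset.mul_sum,
      qBinom_zero q hne, Finset.sum_range_succ, qBinom_self q hne, qBinom_self q hne]
    have hT : (-1 : ℝ) ^ (n + 1) * q ^ (n + 1).choose 2 * x ^ (n + 1)
        = -(x * q ^ n) * ((-1 : ℝ) ^ n * q ^ n.choose 2 * x ^ n) := by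
      have hc : (n + 1).choose 2 = n + n.choose 2 := by
        rw [Nat.choose_succ_succ, Nat.choose_one_right]
      rw [hc, pow_add, pow_add, pow_add]
      ring
    have h1 := Finset.sum_range_succ
      (fun k => (-1 : ℝ) ^ k * q ^ k.choose 2 * x ^ k * qBinom q n k) n
    have h2 := Finset.sum_range_succ'
      (fun k => (-1 : ℝ) ^ k * q ^ k.choose 2 * x ^ k * qBinom q n k) n
    have hswap : (∑ k ∈ Finset.range n,
        (-1 : ℝ) ^ (k + 1) * q ^ (k + 1).choose 2 * x ^ (k + 1) * qBinom q n (k + 1))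
        = (∑ k ∈ Finset.range n, (-1 : ℝ) ^ k * q ^ k.choose 2 * x ^ k * qBinom q n k)
          + (-1 : ℝ) ^ n * q ^ n.choose 2 * x ^ n * qBinom q n n
          - (-1 : ℝ) ^ 0 * q ^ Nat.choose 0 2 * x ^ 0 * qBinom q n 0 := by
      linarith
    rw [hswap, qBinom_self q hne, qBinom_zero q hne, hT]
    ring

/-- For real `q` with `q ≠ 0` and `|q| ≠ 1` and nonnegative integers `n`, `m`:
`∑_{k=0}^n (-1)^k q^{k(m-n+1)+C(k,2)} [n choose k]_q = (q^{m-n+1};q)_n`; in particular this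
equals `(q;q)_n` when `m = n` and `0` when `m < n`. -/
theorem qBinom_alternating_sum (q : ℝ) (hq0 : q ≠ 0) (hq1 : |q| ≠ 1) (n m : ℕ) :
    (∑ k ∈ Finset.range (n + 1),
        (-1 : ℝ) ^ k * q ^ ((k : ℤ) * ((m : ℤ) - (n : ℤ) + 1) + (k.choose 2 : ℤ)) *
          qBinom q n k)
      = ∏ j ∈ Finset.range n, (1 - q ^ ((m : ℤ) - (n : ℤ) + 1) * q ^ j) ∧
    (m = n →
      (∑ k ∈ Finset.range (n + 1),
        (-1 : ℝ) ^ k * q ^ ((k : ℤ) * ((m : ℤ) - (n : ℤ) + 1) + (k.choose 2 : ℤ)) *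
          qBinom q n k) = qPoch q q n) ∧
    (m < n →
      (∑ k ∈ Finset.range (n + 1),
        (-1 : ℝ) ^ k * q ^ ((k : ℤ) * ((m : ℤ) - (n : ℤ) + 1) + (k.choose 2 : ℤ)) *
          qBinom q n k) = 0) := by
  have hne : ∀ j : ℕ, (1 : ℝ) - q ^ (j + 1) ≠ 0 := by
    intro j h
    have h1 : q ^ (j + 1) = 1 := by linarith
    have h2 : |q| ^ (j + 1) = 1 := by
      rw [← abs_pow, h1, abs_one]
    rcases hq1.lt_or_gt with h' | h'
    · have h3 : |q| ^ (j + 1) < 1 := pow_lt_one₀ (abs_nonneg q) h' (by omega)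
      linarith
    · have h3 : (1 : ℝ) < |q| ^ (j + 1) := one_lt_pow₀ h' (by omega)
      linarith
  set x : ℝ := q ^ ((m : ℤ) - (n : ℤ) + 1) with hx
  have hterm : ∀ k : ℕ,
      (q : ℝ) ^ ((k : ℤ) * ((m : ℤ) - (n : ℤ) + 1) + (k.choose 2 : ℤ))
        = q ^ k.choose 2 * x ^ k := by
    intro k
    rw [zpow_add₀ hq0, zpow_natCast, mul_comm ((k : ℤ)), zpow_mul, zpow_natCast, mul_comm]
  have hmain : (∑ k ∈ Finset.range (n + 1),
      (-1 : ℝ) ^ k * q ^ ((k : ℤ) * ((m : ℤ) - (n : ℤ) + 1) + (k.choose 2 : ℤ)) *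
        qBinom q n k) = ∏ j ∈ Finset.range n, (1 - x * q ^ j) := by
    rw [← qBinom_key q hne x n]
    refine Finset.sum_congr rfl fun k _ => ?_
    rw [hterm k]
    ring
  refine ⟨hmain, ?_, ?_⟩
  · intro hmn
    rw [hmain]
    subst hmn
    have hx1 : x = q := by rw [hx]; simp
    rw [hx1]
    rfl
  · intro hmn
    rw [hmain]
    refine Finset.prod_eq_zero (Finset.mem_range.mpr (show n - m - 1 < n by omega)) ?_
    rw [hx, show (q : ℝ) ^ (n - m - 1) = q ^ ((n - m - 1 : ℕ) : ℤ) from (zpow_natCast _ _).symm,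
      ← zpow_add₀ hq0]
    have : ((m : ℤ) - (n : ℤ) + 1 + ((n - m - 1 : ℕ) : ℤ)) = 0 := by
      omega
    rw [this, zpow_zero, sub_self]
end
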